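/- arXiv:1709.01167 — 3 statements merged into one kernel-verified Lean document; each statement's English description precedes it below -/
import Mathlib

section
/- Under Assumptions (A1) and (A2), for any 0 < δ < 1 there exists N such that for all n ≥ N, with the uniform partition t_i = iT/n, one has the inclusions 𝒜_n^{−δ}[0,T] ⊆ Ã[0,T] ⊆ 𝒜_n^δ[0,T]; that is, if X^u(t_i) ≥ δ at all grid points then X^u(t) ≥ 0 for all t ∈ [0,T], and if X^u(t) ≥ 0 for all t ∈ [0,T] then X^u(t_i) ≥ −δ at all grid points. -/
open MeasureTheory Set Filter Topology

noncomputable section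

/-- An admissible control on `[0,T]`: measurable, `U`-valued, square-integrable. -/
def Admissible (U : Set ℝ) (T : ℝ) (u : ℝ → ℝ) : Prop :=
  Measurable u ∧ (∀ t, u t ∈ U) ∧
    IntervalIntegrable (fun t => (u t) ^ 2) MeasureTheory.volume 0 T

/-- `X` solves the controlled ODE `X s = x₀ + ∫₀ˢ b (X t) (u t) dt` on `[0,T]`. -/
def Trajectory (b : ℝ → ℝ → ℝ) (x₀ T : ℝ) (u X : ℝ → ℝ) : Prop :=
  ContinuousOn X (Set.Icc 0 T) ∧
    ∀ s ∈ Set.Icc (0 : ℝ) T, X s = x₀ + ∫ t in (0 : ℝ)..s, b (X t) (u t)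

lemma growth_aux {U : Set ℝ} (hU : IsConnected U) {b : ℝ → ℝ → ℝ}
    (huc : UniformContinuousOn (fun q : ℝ × ℝ => b q.1 q.2) (Set.univ ×ˢ U)) :
    ∃ A B : ℝ, 0 ≤ A ∧ 0 ≤ B ∧ ∀ v ∈ U, |b 0 v| ≤ A + B * |v| := by
  obtain ⟨v₀, hv₀⟩ := hU.nonempty
  rw [Metric.uniformContinuousOn_iff] at huc
  obtain ⟨η, hη, H⟩ := huc 1 one_pos
  have hord : U.OrdConnected := hU.isPreconnected.ordConnected
  have step : ∀ v ∈ U, ∀ w ∈ U, |v - w| < η → |b 0 v - b 0 w| < 1 := by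
    intro v hv w hw hvw
    have := H (0, v) ⟨mem_univ _, hv⟩ (0, w) ⟨mem_univ _, hw⟩ ?_
    · simpa [Real.dist_eq] using this
    · simp [Prod.dist_eq, Real.dist_eq, hvw, hη]
  have main : ∀ k : ℕ, ∀ v ∈ U, |v - v₀| ≤ k * (η / 2) → |b 0 v - b 0 v₀| ≤ k := by
    intro k
    induction k with
    | zero =>
      intro v hv h
      have : v = v₀ := by
        have := abs_nonneg (v - v₀)
        have hv0 : |v - v₀| = 0 := le_antisymm (by simpa using h) this
        have := abs_eq_zero.mp hv0
        linarith [this]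
      simp [this]
    | succ k ih =>
      intro v hv h
      by_cases hc : |v - v₀| ≤ k * (η / 2)
      · refine (ih v hv hc).trans ?_
        push_cast; linarith
      · push_neg at hc
        rcases le_or_gt v₀ v with hvv | hvv
        · have habs : |v - v₀| = v - v₀ := abs_of_nonneg (by linarith)
          set w := v₀ + k * (η / 2) with hw
          have hk0 : (0:ℝ) ≤ k * (η / 2) := by positivity
          have hwU : w ∈ U := hord.out hv₀ hv ⟨by simp only [hw]; linarith, by rw [habs] at hc; simp only [hw]; linarith⟩
          have h1 : |b 0 v - b 0 w| < 1 := by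
            refine step v hv w hwU ?_
            rw [habs] at hc h
            have : |v - w| = v - w := abs_of_nonneg (by simp [hw]; linarith)
            rw [this]
            push_cast at h
            simp only [hw]
            linarith
          have h2 : |b 0 w - b 0 v₀| ≤ k := by
            refine ih w hwU ?_
            rw [hw]
            rw [abs_of_nonneg (by linarith)]
            simp
          calc |b 0 v - b 0 v₀| ≤ |b 0 v - b 0 w| + |b 0 w - b 0 v₀| := abs_sub_le _ _ _
            _ ≤ (k : ℝ) + 1 := by linarith
            _ = ((k + 1 : ℕ) : ℝ) := by push_cast; ring
        · have habs : |v - v₀| = v₀ - v := by rw [abs_of_neg (show v - v₀ < 0 by linarith)]; ring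
          set w := v₀ - k * (η / 2) with hw
          have hk0 : (0:ℝ) ≤ k * (η / 2) := by positivity
          have hwU : w ∈ U := hord.out hv hv₀ ⟨by rw [habs] at hc; simp [hw]; linarith, by simp [hw]; linarith⟩
          have h1 : |b 0 v - b 0 w| < 1 := by
            refine step v hv w hwU ?_
            rw [habs] at hc h
            have : |v - w| = w - v := by rw [abs_of_nonpos (by simp only [hw]; linarith : v - w ≤ 0)]; ring
            rw [this]
            push_cast at h
            simp only [hw]
            linarith
          have h2 : |b 0 w - b 0 v₀| ≤ k := by
            refine ih w hwU ?_
            rw [hw]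
            rw [abs_of_nonpos (by linarith)]
            simp
          calc |b 0 v - b 0 v₀| ≤ |b 0 v - b 0 w| + |b 0 w - b 0 v₀| := abs_sub_le _ _ _
            _ ≤ (k : ℝ) + 1 := by linarith
            _ = ((k + 1 : ℕ) : ℝ) := by push_cast; ring
  refine ⟨|b 0 v₀| + 1 + (2 / η) * |v₀|, 2 / η, by positivity, by positivity, ?_⟩
  intro v hv
  set k := ⌈|v - v₀| * (2 / η)⌉₊ with hk
  have h1 : |v - v₀| ≤ k * (η / 2) := by
    have := Nat.le_ceil (|v - v₀| * (2 / η))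
    rw [← hk] at this
    have h2 : |v - v₀| * (2 / η) * (η / 2) ≤ (k : ℝ) * (η / 2) :=
      mul_le_mul_of_nonneg_right this (by positivity)
    calc |v - v₀| = |v - v₀| * (2 / η) * (η / 2) := by field_simp
      _ ≤ (k : ℝ) * (η / 2) := h2
  have h2 : (k : ℝ) ≤ |v - v₀| * (2 / η) + 1 := by
    have := Nat.ceil_lt_add_one (a := |v - v₀| * (2 / η)) (by positivity)
    rw [← hk] at this
    linarith
  have h3 := main k v hv h1
  have h4 : |b 0 v| ≤ |b 0 v₀| + k := by
    have := abs_sub_abs_le_abs_sub (b 0 v) (b 0 v₀)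
    linarith
  have h5 : |v - v₀| ≤ |v| + |v₀| := abs_sub _ _
  have hη' : 0 < 2 / η := by positivity
  nlinarith [abs_nonneg v, abs_nonneg v₀]

set_option maxHeartbeats 2000000 in
/-- For fine enough uniform partitions, `𝒜ₙ^{−δ}[0,T] ⊆ Ã[0,T] ⊆ 𝒜ₙ^{δ}[0,T]`. -/
theorem stmt_10
    (T x₀ : ℝ) (hT : 0 < T) (U : Set ℝ) (hU : IsConnected U)
    (b : ℝ → ℝ → ℝ)
    -- (A1)
    (hA1uc : UniformContinuousOn (fun q : ℝ × ℝ => b q.1 q.2) (Set.univ ×ˢ U))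
    (hA1lip : ∃ c > 0, ∀ x₁ x₂ v, v ∈ U → |b x₁ v - b x₂ v| ≤ c * |x₁ - x₂|)
    -- (A2)
    (hA2 : ∃ c > 0, ∀ u : ℝ → ℝ, Admissible U T u →
      (∫ t in (0 : ℝ)..T, (b 0 (u t)) ^ 2) ≤ c)
    (δ : ℝ) (hδ0 : 0 < δ) (hδ1 : δ < 1) :
    ∃ N : ℕ, ∀ n : ℕ, N ≤ n →
      ∀ u X : ℝ → ℝ, Admissible U T u → Trajectory b x₀ T u X →
        ((∀ i ≤ n, δ ≤ X ((i : ℝ) * T / n)) →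
          ∀ t ∈ Set.Icc (0 : ℝ) T, 0 ≤ X t) ∧
        ((∀ t ∈ Set.Icc (0 : ℝ) T, 0 ≤ X t) →
          ∀ i ≤ n, -δ ≤ X ((i : ℝ) * T / n)) := by
  obtain ⟨cL, hcL, hlip⟩ := hA1lip
  obtain ⟨c₂, hc₂, hA2'⟩ := hA2
  obtain ⟨A, B, hA, hB, hgrow⟩ := growth_aux hU hA1uc
  set lR : ℝ := 2 * c₂ / δ with hlR
  have hlRpos : 0 < lR := by positivity
  refine ⟨⌈(lR / 2 + cL) * T * 4 / (3 * δ)⌉₊ + 1, ?_⟩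
  intro n hn u X hu hX
  have hn0 : 0 < n := lt_of_lt_of_le (Nat.succ_le_succ (Nat.zero_le _)) hn
  have hnR : (0:ℝ) < n := by exact_mod_cast hn0
  have hnbig : (lR / 2 + cL) * T * 4 / (3 * δ) < n := by
    have h1 := Nat.le_ceil ((lR / 2 + cL) * T * 4 / (3 * δ))
    have h2 : (⌈(lR / 2 + cL) * T * 4 / (3 * δ)⌉₊ : ℝ) + 1 ≤ (n : ℝ) := by
      exact_mod_cast hn
    linarith
  have hXc : ContinuousOn X (Icc 0 T) := hX.1
  have hXeq := hX.2
  have hu_meas : Measurable u := hu.1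
  have huU : ∀ t, u t ∈ U := hu.2.1
  have hu2 : IntervalIntegrable (fun t => u t ^ 2) volume 0 T := hu.2.2
  constructor
  swap
  · -- trivial inclusion
    intro hpos i hi
    have h1 : (0:ℝ) ≤ (i:ℝ) * T / n := by positivity
    have h2 : (i:ℝ) * T / n ≤ T := by
      rw [div_le_iff₀ hnR]
      have : (i:ℝ) ≤ (n:ℝ) := by exact_mod_cast hi
      nlinarith
    linarith [hpos _ ⟨h1, h2⟩]
  intro hgrid
  by_contra hcon
  push_neg at hcon
  obtain ⟨ts, htsmem, hts⟩ := hcon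
  set φ : ℝ → ℝ := fun r => b (X r) (u r) with hφ
  set g : ℝ → ℝ := fun r => b 0 (u r) with hg
  -- measurability
  have hXaem : AEMeasurable X (volume.restrict (Icc 0 T)) :=
    hXc.aemeasurable measurableSet_Icc
  have hbc : ContinuousOn (fun q : ℝ × ℝ => b q.1 q.2) (Set.univ ×ˢ U) :=
    hA1uc.continuousOn
  have hFm : Measurable ((Set.univ ×ˢ U).restrict (fun q : ℝ × ℝ => b q.1 q.2)) :=
    hbc.restrict.measurable
  have hφaem : AEMeasurable φ (volume.restrict (Icc 0 T)) := by
    have hpair : AEMeasurable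
        (fun r => (⟨(X r, u r), ⟨mem_univ _, huU r⟩⟩ : ↥(Set.univ ×ˢ U)))
        (volume.restrict (Icc 0 T)) :=
      AEMeasurable.subtype_mk (hXaem.prodMk hu_meas.aemeasurable)
    exact hFm.comp_aemeasurable hpair
  have hgaem : AEMeasurable g (volume.restrict (Icc 0 T)) := by
    have hpair : AEMeasurable
        (fun r => (⟨((0:ℝ), u r), ⟨mem_univ _, huU r⟩⟩ : ↥(Set.univ ×ˢ U)))
        (volume.restrict (Icc 0 T)) :=
      AEMeasurable.subtype_mk (aemeasurable_const.prodMk hu_meas.aemeasurable)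
    exact hFm.comp_aemeasurable hpair
  -- bound on X
  obtain ⟨M, hM⟩ := isCompact_Icc.exists_bound_of_continuousOn hXc
  have hM0 : 0 ≤ M := le_trans (norm_nonneg _) (hM 0 ⟨le_rfl, hT.le⟩)
  -- pointwise growth bounds
  have hgbd : ∀ r, |g r| ≤ (A + B / 2) + (B / 2) * u r ^ 2 := by
    intro r
    have h1 := hgrow _ (huU r)
    have h2 : |u r| ≤ (1 + u r ^ 2) / 2 := by
      nlinarith [sq_nonneg (|u r| - 1), sq_abs (u r), abs_nonneg (u r)]
    nlinarith [abs_nonneg (u r)]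
  have hg2bd : ∀ r, |g r ^ 2| ≤ 2 * A ^ 2 + 2 * B ^ 2 * u r ^ 2 := by
    intro r
    have h1 := hgrow _ (huU r)
    have h2 : |g r ^ 2| = |g r| ^ 2 := abs_pow _ _
    rw [h2]
    nlinarith [abs_nonneg (g r), abs_nonneg (u r), sq_abs (u r), sq_nonneg (A - B * |u r|)]
  have hφbd : ∀ r ∈ Icc (0:ℝ) T, |φ r| ≤ ((A + B / 2) + cL * M) + (B / 2) * u r ^ 2 := by
    intro r hr
    have h1 : |φ r - g r| ≤ cL * |X r - 0| := hlip (X r) 0 (u r) (huU r)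
    have h2 : |X r| ≤ M := by simpa [Real.norm_eq_abs] using hM r hr
    have h3 : |φ r| ≤ |g r| + cL * |X r| := by
      have := abs_sub_abs_le_abs_sub (φ r) (g r)
      simp only [sub_zero] at h1
      calc |φ r| ≤ |g r| + |φ r - g r| := by
            have := abs_sub_le (φ r) (g r) 0
            simp at this ⊢
            linarith [abs_sub_le (φ r) (g r) 0, abs_sub_comm (φ r) (g r)]
        _ ≤ |g r| + cL * |X r| := by linarith
    have := hgbd r
    nlinarith [abs_nonneg (X r)]
  -- integrability
  have hdomInt : ∀ (α β : ℝ), IntervalIntegrable (fun r => α + β * u r ^ 2) volume 0 T :=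
    fun α β => (intervalIntegrable_const).add (hu2.const_mul β)
  have hgInt : IntervalIntegrable g volume 0 T := by
    rw [intervalIntegrable_iff_integrableOn_Ioc_of_le hT.le]
    refine Integrable.mono' (g := fun r => (A + B / 2) + (B / 2) * u r ^ 2) ?_ ?_ ?_
    · exact ((hdomInt (A + B / 2) (B / 2)).1 : IntegrableOn _ (Ioc 0 T) volume)
    · exact (hgaem.mono_measure
        (Measure.restrict_mono Ioc_subset_Icc_self le_rfl)).aestronglyMeasurable
    · exact Eventually.of_forall fun r => by
        simpa [Real.norm_eq_abs] using hgbd r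
  have hg2Int : IntervalIntegrable (fun r => g r ^ 2) volume 0 T := by
    rw [intervalIntegrable_iff_integrableOn_Ioc_of_le hT.le]
    refine Integrable.mono' (g := fun r => 2 * A ^ 2 + 2 * B ^ 2 * u r ^ 2) ?_ ?_ ?_
    · exact ((hdomInt (2 * A ^ 2) (2 * B ^ 2)).1 : IntegrableOn _ (Ioc 0 T) volume)
    · exact (((hgaem.pow_const 2).mono_measure
        (Measure.restrict_mono Ioc_subset_Icc_self le_rfl))).aestronglyMeasurable
    · exact Eventually.of_forall fun r => by
        simpa [Real.norm_eq_abs] using hg2bd r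
  have hφInt : IntervalIntegrable φ volume 0 T := by
    rw [intervalIntegrable_iff_integrableOn_Ioc_of_le hT.le]
    refine Integrable.mono' (g := fun r => ((A + B / 2) + cL * M) + (B / 2) * u r ^ 2) ?_ ?_ ?_
    · exact ((hdomInt ((A + B / 2) + cL * M) (B / 2)).1 : IntegrableOn _ (Ioc 0 T) volume)
    · exact (hφaem.mono_measure
        (Measure.restrict_mono Ioc_subset_Icc_self le_rfl)).aestronglyMeasurable
    · rw [ae_restrict_iff' measurableSet_Ioc]
      exact Eventually.of_forall fun r hr => by
        simpa [Real.norm_eq_abs] using hφbd r (Ioc_subset_Icc_self hr)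
  -- grid point below ts
  have hts0 : 0 ≤ ts := htsmem.1
  have htsT : ts ≤ T := htsmem.2
  obtain ⟨ti, hti0, hti_le, hti_ub, hXi⟩ :
      ∃ ti : ℝ, 0 ≤ ti ∧ ti ≤ ts ∧ ts - ti ≤ T / n ∧ δ ≤ X ti := by
    refine ⟨(⌊ts * n / T⌋₊ : ℝ) * T / n, by positivity, ?_, ?_, ?_⟩
    · have h1 : (⌊ts * n / T⌋₊ : ℝ) ≤ ts * n / T := Nat.floor_le (by positivity)
      rw [div_le_iff₀ hnR]
      calc (⌊ts * n / T⌋₊:ℝ) * T ≤ (ts * n / T) * T := by nlinarith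
        _ = ts * n := by field_simp
    · have h1 : ts * n / T < (⌊ts * n / T⌋₊ : ℝ) + 1 := Nat.lt_floor_add_one _
      have h2 : ts * n < ((⌊ts * n / T⌋₊:ℝ) + 1) * T := by
        rw [div_lt_iff₀ hT] at h1; linarith
      have h3 : ts ≤ ((⌊ts * n / T⌋₊:ℝ) + 1) * T / n := by
        rw [le_div_iff₀ hnR]; linarith
      have h4 : ((⌊ts * n / T⌋₊:ℝ) + 1) * T / n = (⌊ts * n / T⌋₊:ℝ) * T / n + T / n := by
        field_simp
      linarith
    · refine hgrid _ ?_
      have h1 : ts * n / T ≤ (n : ℝ) := by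
        rw [div_le_iff₀ hT]; nlinarith
      have h2 := Nat.floor_mono h1
      rwa [Nat.floor_natCast] at h2
  -- the crossing points
  set S : Set ℝ := {s ∈ Icc (0:ℝ) ts | δ ≤ X s} with hS
  have hScl : IsClosed S := by
    have : ContinuousOn X (Icc 0 ts) := hXc.mono (Icc_subset_Icc le_rfl htsT)
    have h2 : S = Icc 0 ts ∩ X ⁻¹' (Ici δ) := by
      ext s; simp [hS, mem_preimage, mem_Ici, And.comm]
    rw [h2]
    exact this.preimage_isClosed_of_isClosed isClosed_Icc isClosed_Ici
  have hScomp : IsCompact S := isCompact_Icc.of_isClosed_subset hScl (fun s hs => hs.1)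
  have hSne : S.Nonempty := ⟨ti, ⟨hti0, hti_le⟩, hXi⟩
  set a : ℝ := sSup S with ha
  have haS : a ∈ S := hScomp.sSup_mem hSne
  have hta : ti ≤ a := le_csSup hScomp.bddAbove ⟨⟨hti0, hti_le⟩, hXi⟩
  have ha0 : 0 ≤ a := haS.1.1
  have hats : a ≤ ts := haS.1.2
  have hXa : δ ≤ X a := haS.2
  set E : Set ℝ := {s ∈ Icc a ts | X s ≤ 0} with hE
  have hEcl : IsClosed E := by
    have : ContinuousOn X (Icc a ts) :=
      hXc.mono (Icc_subset_Icc ha0 htsT)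
    have h2 : E = Icc a ts ∩ X ⁻¹' (Iic 0) := by
      ext s; simp [hE, mem_preimage, mem_Iic, And.comm]
    rw [h2]
    exact this.preimage_isClosed_of_isClosed isClosed_Icc isClosed_Iic
  have hEcomp : IsCompact E := isCompact_Icc.of_isClosed_subset hEcl (fun s hs => hs.1)
  have hEne : E.Nonempty := ⟨ts, ⟨hats, le_rfl⟩, hts.le⟩
  set e : ℝ := sInf E with he
  have heE : e ∈ E := hEcomp.sInf_mem hEne
  have haee : a ≤ e := heE.1.1
  have hets : e ≤ ts := heE.1.2
  have hXe : X e ≤ 0 := heE.2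
  have heT : e ≤ T := hets.trans htsT
  have he0 : 0 ≤ e := ha0.trans haee
  have haT : a ≤ T := hats.trans htsT
  have heh : e - a ≤ T / n := by linarith
  -- interior bound
  have hbnd : ∀ r ∈ Ioo a e, 0 ≤ X r ∧ X r ≤ δ := by
    rintro r ⟨har, hre⟩
    constructor
    · by_contra hcon2
      push_neg at hcon2
      have hrE : r ∈ E := ⟨⟨har.le, hre.le.trans hets⟩, hcon2.le⟩
      have := csInf_le hEcomp.bddBelow hrE
      rw [← he] at this
      linarith
    · by_contra hcon2
      push_neg at hcon2
      have hrS : r ∈ S := ⟨⟨ha0.trans har.le, hre.le.trans hets⟩, hcon2.le⟩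
      have := le_csSup hScomp.bddAbove hrS
      rw [← ha] at this
      linarith
  -- integral equation manipulations
  have hsub0a : Set.uIcc (0:ℝ) a ⊆ Set.uIcc (0:ℝ) T := by
    rw [uIcc_of_le ha0, uIcc_of_le hT.le]; exact Icc_subset_Icc le_rfl haT
  have hsubae : Set.uIcc a e ⊆ Set.uIcc (0:ℝ) T := by
    rw [uIcc_of_le haee, uIcc_of_le hT.le]; exact Icc_subset_Icc ha0 heT
  have hφI0a : IntervalIntegrable φ volume 0 a := hφInt.mono_set hsub0a
  have hφIae : IntervalIntegrable φ volume a e := hφInt.mono_set hsubae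
  have hg2Iae : IntervalIntegrable (fun r => g r ^ 2) volume a e := hg2Int.mono_set hsubae
  have hXaeq : X a = x₀ + ∫ t in (0:ℝ)..a, φ t := hXeq a ⟨ha0, haT⟩
  have hXeeq : X e = x₀ + ∫ t in (0:ℝ)..e, φ t := hXeq e ⟨he0, heT⟩
  have hadd : (∫ t in (0:ℝ)..e, φ t) = (∫ t in (0:ℝ)..a, φ t) + ∫ t in a..e, φ t :=
    (intervalIntegral.integral_add_adjacent_intervals hφI0a hφIae).symm
  have key1 : δ ≤ -∫ t in a..e, φ t := by
    have h1 : X a - X e = -∫ t in a..e, φ t := by rw [hXaeq, hXeeq, hadd]; ring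
    linarith
  have key2 : -∫ t in a..e, φ t ≤ ∫ t in a..e, |φ t| := by
    have h1 := intervalIntegral.abs_integral_le_integral_abs (f := φ) (μ := volume) haee
    have h2 := neg_le_abs (∫ t in a..e, φ t)
    linarith
  -- comparison with ψ
  set ψ : ℝ → ℝ := fun r => (lR / 2 + cL) + (1 / (2 * lR)) * g r ^ 2 with hψ
  have hψInt : IntervalIntegrable ψ volume a e :=
    (intervalIntegrable_const).add (hg2Iae.const_mul _)
  have hφabsInt : IntervalIntegrable (fun r => |φ r|) volume a e := hφIae.abs
  have key3 : (∫ t in a..e, |φ t|) ≤ ∫ t in a..e, ψ t := by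
    refine intervalIntegral.integral_mono_ae_restrict haee hφabsInt hψInt ?_
    have hnull : (volume : Measure ℝ) ({a, e} : Set ℝ) = 0 :=
      (Set.Countable.measure_zero (Set.countable_insert.mpr (Set.countable_singleton e)) _)
    have hae2 : ∀ᵐ r ∂volume.restrict (Icc a e), r ∉ ({a, e} : Set ℝ) :=
      ae_mono Measure.restrict_le_self (measure_eq_zero_iff_ae_notMem.mp hnull)
    filter_upwards [ae_restrict_mem measurableSet_Icc, hae2] with r hr hr2
    have hIoo : r ∈ Ioo a e := by
      rcases hr with ⟨h1, h2⟩
      simp only [mem_insert_iff, mem_singleton_iff, not_or] at hr2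
      exact ⟨lt_of_le_of_ne h1 (Ne.symm hr2.1), lt_of_le_of_ne h2 hr2.2⟩
    obtain ⟨h0r, hrδ⟩ := hbnd r hIoo
    have h1 : |φ r - g r| ≤ cL * |X r - 0| := hlip (X r) 0 (u r) (huU r)
    have h2 : |X r| ≤ 1 := by rw [abs_of_nonneg h0r]; linarith
    have h3 : |φ r| ≤ |g r| + cL := by
      simp only [sub_zero] at h1
      have h4 := abs_sub_le (φ r) (g r) 0
      simp only [sub_zero] at h4
      nlinarith [abs_nonneg (X r)]
    have h5 : |g r| ≤ lR / 2 + (1 / (2 * lR)) * g r ^ 2 := by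
      have h6 : 2 * lR * |g r| ≤ lR ^ 2 + g r ^ 2 := by
        nlinarith [sq_nonneg (|g r| - lR), sq_abs (g r)]
      have h7 := mul_le_mul_of_nonneg_left h6 (le_of_lt (by positivity : (0:ℝ) < 1 / (2 * lR)))
      have h8 : (1 / (2 * lR)) * (2 * lR * |g r|) = |g r| := by field_simp
      have h9 : (1 / (2 * lR)) * (lR ^ 2 + g r ^ 2) = lR / 2 + (1 / (2 * lR)) * g r ^ 2 := by
        field_simp
      rw [h8, h9] at h7
      exact h7
    have := le_abs_self (φ r)
    simp only [hψ]
    linarith [abs_nonneg (φ r), le_trans (le_abs_self (φ r)) h3]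
  have key4 : (∫ t in a..e, ψ t)
      = (lR / 2 + cL) * (e - a) + (1 / (2 * lR)) * ∫ t in a..e, g t ^ 2 := by
    rw [hψ]
    rw [intervalIntegral.integral_add intervalIntegrable_const (hg2Iae.const_mul _),
      intervalIntegral.integral_const, intervalIntegral.integral_const_mul]
    simp [smul_eq_mul]; ring
  have key5 : (∫ t in a..e, g t ^ 2) ≤ c₂ := by
    refine le_trans (intervalIntegral.integral_mono_interval ha0 haee heT
      (Eventually.of_forall fun r => sq_nonneg _) hg2Int) ?_
    exact hA2' u hu
  -- final numeric contradiction
  have hfin1 : (1 / (2 * lR)) * c₂ = δ / 4 := by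
    rw [hlR]; field_simp; ring
  have hfin2 : (lR / 2 + cL) * (e - a) ≤ (lR / 2 + cL) * (T / n) := by
    apply mul_le_mul_of_nonneg_left heh
    positivity
  have hfin3 : (lR / 2 + cL) * (T / n) < 3 * δ / 4 := by
    rw [div_lt_iff₀ (by positivity : (0:ℝ) < 3 * δ)] at hnbig
    have e1 : (lR / 2 + cL) * (T / (n:ℝ)) = ((lR / 2 + cL) * T) / (n:ℝ) := by ring
    rw [e1, div_lt_iff₀ hnR]
    linarith
  have hg2nonneg : (0:ℝ) ≤ ∫ t in a..e, g t ^ 2 :=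
    intervalIntegral.integral_nonneg haee (fun r _ => sq_nonneg _)
  have hmono : (1 / (2 * lR)) * (∫ t in a..e, g t ^ 2) ≤ (1 / (2 * lR)) * c₂ :=
    mul_le_mul_of_nonneg_left key5 (by positivity)
  linarith
end
end

section
/- Under Assumptions (A1) and (A2), let 0 < δ < 1 and let 0 = t₀ < t₁ < ⋯ < t_n = T be the uniform partition with mesh T/n = √δ. There is a constant C > 0 depending only on x₀ and T such that for any two admissible controls u, u⁰ ∈ 𝒰[0,T] satisfying |X^{u⁰}(t_i) − X^u(t_i)| ≤ δ for all i = 0,1,…,n, one has sup_{0≤r≤T} |X^{u⁰}(r) − X^u(r)| ≤ C√δ. -/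
open MeasureTheory Set Filter Topology

noncomputable section

/-!
Testing (A2) on constant controls bounds `b 0` on `U`, so by (A1) the drift grows at most
linearly, `|b x v| ≤ B + L |x|`. Grönwall's inequality then bounds every trajectory by a
constant `M` independent of the control, hence all trajectories are `(B + L M)`-Lipschitz in
time. Every point of `[0,T]` lies within one mesh `√δ` to the right of a node, where the two
trajectories are `δ`-close; since `δ ≤ √δ`, this gives the bound with `C = 2 (B + L M) + 1`.
-/

theorem le_gronwallBound_of_le_integral {f : ℝ → ℝ} {δ K ε a b : ℝ} (hf : Continuous f)
    (hK : 0 ≤ K) (h : ∀ s ∈ Icc a b, f s ≤ δ + ∫ t in a..s, (K * f t + ε)) :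
    ∀ s ∈ Icc a b, f s ≤ gronwallBound δ K ε (s - a) := by
  set F : ℝ → ℝ := fun s => δ + ∫ t in a..s, (K * f t + ε)
  have hg : Continuous fun t => K * f t + ε := by fun_prop
  have hF : ∀ s, HasDerivAt F (K * f s + ε) s := fun s =>
    (intervalIntegral.integral_hasDerivAt_right (hg.intervalIntegrable _ _)
      (hg.stronglyMeasurableAtFilter _ _) hg.continuousAt).const_add δ
  have hF_le := le_gronwallBound_of_liminf_deriv_right_le (f := F) (δ := δ) (K := K) (ε := ε)
    (a := a) (b := b)
    (fun s _ => (hF s).continuousAt.continuousWithinAt)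
    (fun s _ r hr => (hF s).hasDerivWithinAt.liminf_right_slope_le hr)
    (by simp [F]) (fun s hs => by gcongr; exact h s ⟨hs.1, hs.2.le⟩)
  exact fun s hs => (h s hs).trans (hF_le s hs)

theorem ContinuousOn.measurable_comp {α β γ : Type*} [MeasurableSpace α] [TopologicalSpace β]
    [MeasurableSpace β] [OpensMeasurableSpace β] [TopologicalSpace γ] [MeasurableSpace γ]
    [BorelSpace γ] {f : β → γ} {s : Set β} (hf : ContinuousOn f s) {g : α → β}
    (hg : Measurable g) (hgs : ∀ a, g a ∈ s) : Measurable fun a => f (g a) :=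
  hf.domRestrict.measurable.comp (hg.subtype_mk (h := hgs))

section Drift

variable {U : Set ℝ} {b : ℝ → ℝ → ℝ} {B L : ℝ} {u Y : ℝ → ℝ}

theorem intervalIntegrable_drift (hb : ContinuousOn (fun q : ℝ × ℝ => b q.1 q.2) (univ ×ˢ U))
    (hgrowth : ∀ x, ∀ v ∈ U, |b x v| ≤ B + L * |x|) (hu : Measurable u) (huU : ∀ t, u t ∈ U)
    (hY : Continuous Y) (s₁ s₂ : ℝ) :
    IntervalIntegrable (fun t => b (Y t) (u t)) volume s₁ s₂ :=
  have hg : Continuous fun t => B + L * |Y t| := by fun_prop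
  (hg.intervalIntegrable s₁ s₂).mono_fun'
    (hb.measurable_comp (hY.measurable.prodMk hu) fun t => ⟨trivial, huU t⟩).aestronglyMeasurable
    (ae_of_all _ fun t => by simpa using hgrowth (Y t) (u t) (huU t))

theorem abs_le_gronwallBound_of_eq_integral {x₀ T : ℝ}
    (hb : ContinuousOn (fun q : ℝ × ℝ => b q.1 q.2) (univ ×ˢ U))
    (hgrowth : ∀ x, ∀ v ∈ U, |b x v| ≤ B + L * |x|) (hL : 0 ≤ L) (hu : Measurable u)
    (huU : ∀ t, u t ∈ U) (hY : Continuous Y)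
    (heq : ∀ s ∈ Icc 0 T, Y s = x₀ + ∫ t in 0..s, b (Y t) (u t)) :
    ∀ s ∈ Icc 0 T, |Y s| ≤ gronwallBound |x₀| L B s := by
  have hint := intervalIntegrable_drift hb hgrowth hu huU hY
  have hg : Continuous fun t => L * |Y t| + B := by fun_prop
  have hY_le : ∀ s ∈ Icc 0 T, |Y s| ≤ |x₀| + ∫ t in 0..s, (L * |Y t| + B) := by
    intro s hs
    rw [heq s hs]
    calc |x₀ + ∫ t in 0..s, b (Y t) (u t)|
        ≤ |x₀| + ∫ t in 0..s, |b (Y t) (u t)| := by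
          grw [abs_add_le, intervalIntegral.abs_integral_le_integral_abs hs.1]
      _ ≤ |x₀| + ∫ t in 0..s, (L * |Y t| + B) := by
          gcongr
          refine intervalIntegral.integral_mono_on hs.1 (hint 0 s).abs
            (hg.intervalIntegrable 0 s) fun t _ => ?_
          linarith [hgrowth (Y t) (u t) (huU t)]
  simpa using fun s hs => le_gronwallBound_of_le_integral hY.abs hL hY_le s hs

end Drift

theorem Trajectory.exists_continuous_extension {b : ℝ → ℝ → ℝ} {x₀ T : ℝ} {u X : ℝ → ℝ}
    (hT : 0 ≤ T) (hX : Trajectory b x₀ T u X) :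
    ∃ Y : ℝ → ℝ, Continuous Y ∧ EqOn Y X (Icc 0 T) ∧
      ∀ s ∈ Icc 0 T, Y s = x₀ + ∫ t in 0..s, b (Y t) (u t) := by
  obtain ⟨hXc, hXeq⟩ := hX
  have hYX : EqOn (fun s => X (projIcc 0 T hT s)) X (Icc 0 T) := fun s hs => by
    simp [projIcc_of_mem hT hs]
  refine ⟨fun s => X (projIcc 0 T hT s),
    hXc.comp_continuous (continuous_subtype_val.comp continuous_projIcc) fun s =>
      (projIcc 0 T hT s).2, hYX, fun s hs => ?_⟩
  rw [hYX hs, hXeq s hs]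
  congr 1
  refine intervalIntegral.integral_congr fun t ht => ?_
  rw [uIcc_of_le hs.1] at ht
  simp only [hYX ⟨ht.1, ht.2.trans hs.2⟩]

theorem Trajectory.abs_sub_le {U : Set ℝ} {b : ℝ → ℝ → ℝ} {x₀ T B L : ℝ} {u X : ℝ → ℝ}
    (hb : ContinuousOn (fun q : ℝ × ℝ => b q.1 q.2) (univ ×ˢ U))
    (hgrowth : ∀ x, ∀ v ∈ U, |b x v| ≤ B + L * |x|) (hB : 0 ≤ B) (hL : 0 ≤ L) (hT : 0 ≤ T)
    (hu : Admissible U T u) (hX : Trajectory b x₀ T u X) {t r : ℝ} (ht : t ∈ Icc 0 T)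
    (hr : r ∈ Icc 0 T) (htr : t ≤ r) :
    |X r - X t| ≤ (B + L * gronwallBound |x₀| L B T) * (r - t) := by
  obtain ⟨hu, huU, -⟩ := hu
  obtain ⟨Y, hY, hYX, hYeq⟩ := hX.exists_continuous_extension hT
  have hYbound : ∀ s ∈ Icc 0 T, |Y s| ≤ gronwallBound |x₀| L B T := fun s hs =>
    (abs_le_gronwallBound_of_eq_integral hb hgrowth hL hu huU hY hYeq s hs).trans
      (gronwallBound_mono (abs_nonneg _) hB hL hs.2)
  have hint := intervalIntegrable_drift hb hgrowth hu huU hY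
  rw [← hYX hr, ← hYX ht, hYeq r hr, hYeq t ht, add_sub_add_left_eq_sub,
    intervalIntegral.integral_interval_sub_left (hint 0 r) (hint 0 t)]
  calc |∫ s in t..r, b (Y s) (u s)|
      ≤ (B + L * gronwallBound |x₀| L B T) * |r - t| := by
        rw [← Real.norm_eq_abs]
        refine intervalIntegral.norm_integral_le_of_norm_le_const fun s hs => ?_
        rw [uIoc_of_le htr] at hs
        have hsT : s ∈ Icc 0 T := ⟨ht.1.trans hs.1.le, hs.2.trans hr.2⟩
        grw [Real.norm_eq_abs, hgrowth _ _ (huU s), hYbound s hsT]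
    _ = (B + L * gronwallBound |x₀| L B T) * (r - t) := by
        rw [abs_of_nonneg (sub_nonneg.2 htr)]

theorem abs_le_sqrt_div_of_integral_sq_le {U : Set ℝ} {f : ℝ → ℝ} {T c : ℝ} (hT : 0 < T)
    (hf : ∀ u, Admissible U T u → ∫ t in 0..T, f (u t) ^ 2 ≤ c) {v : ℝ} (hv : v ∈ U) :
    |f v| ≤ √(c / T) := by
  have h := hf (fun _ => v) ⟨measurable_const, fun _ => hv, intervalIntegrable_const⟩
  rw [intervalIntegral.integral_const, smul_eq_mul, sub_zero] at h
  rw [← Real.sqrt_sq_eq_abs]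
  exact Real.sqrt_le_sqrt ((le_div_iff₀ hT).2 (by linarith))

theorem exists_partition_node_near {T r : ℝ} {n : ℕ} (hT : 0 < T) (hn : 0 < n)
    (hr : r ∈ Icc 0 T) : ∃ i ≤ n, (i : ℝ) * T / n ≤ r ∧ r - (i : ℝ) * T / n ≤ T / n := by
  have hn' : (0 : ℝ) < n := Nat.cast_pos.2 hn
  refine ⟨⌊r * n / T⌋₊, ?_, ?_, ?_⟩
  · exact Nat.floor_le_of_le ((div_le_iff₀ hT).2 (by nlinarith [hr.2]))
  · have := Nat.floor_le (a := r * n / T) (by have := hr.1; positivity)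
    rw [le_div_iff₀ hT] at this
    rw [div_le_iff₀ hn']
    linarith
  · have := Nat.lt_floor_add_one (r * n / T)
    rw [div_lt_iff₀ hT] at this
    rw [sub_le_iff_le_add, ← add_div, le_div_iff₀ hn']
    linarith

theorem abs_sub_le_of_abs_sub_nodes_le {f g : ℝ → ℝ} {T L ε r : ℝ} {n : ℕ} (hT : 0 < T)
    (hn : 0 < n) (hL : 0 ≤ L)
    (hf : ∀ t ∈ Icc 0 T, ∀ r ∈ Icc 0 T, t ≤ r → |f r - f t| ≤ L * (r - t))
    (hg : ∀ t ∈ Icc 0 T, ∀ r ∈ Icc 0 T, t ≤ r → |g r - g t| ≤ L * (r - t))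
    (hnodes : ∀ i ≤ n, |f ((i : ℝ) * T / n) - g ((i : ℝ) * T / n)| ≤ ε) (hr : r ∈ Icc 0 T) :
    |f r - g r| ≤ ε + 2 * L * (T / n) := by
  obtain ⟨i, hin, hle, hnear⟩ := exists_partition_node_near hT hn hr
  set t := (i : ℝ) * T / n
  have ht : t ∈ Icc 0 T := by
    refine ⟨by positivity, ?_⟩
    rw [div_le_iff₀ (Nat.cast_pos.2 hn)]
    exact mul_comm T n ▸ mul_le_mul_of_nonneg_right (Nat.cast_le.2 hin) hT.le
  have hfr := (hf t ht r hr hle).trans (mul_le_mul_of_nonneg_left hnear hL)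
  have hgr := (hg t ht r hr hle).trans (mul_le_mul_of_nonneg_left hnear hL)
  calc |f r - g r| ≤ |f r - f t| + |f t - g t| + |g r - g t| := by
        linarith [abs_sub_le (f r) (f t) (g r), abs_sub_le (f t) (g t) (g r),
          abs_sub_comm (g t) (g r)]
    _ ≤ ε + 2 * L * (T / n) := by linarith [hnodes i hin]

theorem stmt_11_general
    (T x₀ : ℝ) (hT : 0 < T) (U : Set ℝ)
    (b : ℝ → ℝ → ℝ)
    -- (A1)
    (hA1uc : UniformContinuousOn (fun q : ℝ × ℝ => b q.1 q.2) (Set.univ ×ˢ U))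
    (hA1lip : ∃ c > 0, ∀ x₁ x₂ v, v ∈ U → |b x₁ v - b x₂ v| ≤ c * |x₁ - x₂|)
    -- (A2)
    (hA2 : ∃ c > 0, ∀ u : ℝ → ℝ, Admissible U T u →
      (∫ t in (0 : ℝ)..T, (b 0 (u t)) ^ 2) ≤ c) :
    ∃ C > 0, ∀ (δ : ℝ) (n : ℕ), 0 < δ → δ < 1 → 0 < n →
      T / n = Real.sqrt δ →
      ∀ u X u0 X0 : ℝ → ℝ,
        Admissible U T u → Trajectory b x₀ T u X →
        Admissible U T u0 → Trajectory b x₀ T u0 X0 →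
        (∀ i ≤ n, |X0 ((i : ℝ) * T / n) - X ((i : ℝ) * T / n)| ≤ δ) →
        ∀ r ∈ Set.Icc (0 : ℝ) T, |X0 r - X r| ≤ C * Real.sqrt δ := by
  obtain ⟨L, hL, hlip⟩ := hA1lip
  obtain ⟨c, -, hA2⟩ := hA2
  set B := √(c / T)
  have hgrowth : ∀ x, ∀ v ∈ U, |b x v| ≤ B + L * |x| := fun x v hv => by
    have := hlip x 0 v hv
    rw [sub_zero] at this
    linarith [abs_le_sqrt_div_of_integral_sq_le hT hA2 hv, abs_sub_abs_le_abs_sub (b x v) (b 0 v)]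
  set M := B + L * gronwallBound |x₀| L B T
  have hM : 0 ≤ M := by
    have := gronwallBound_mono (abs_nonneg x₀) (Real.sqrt_nonneg (c / T)) hL.le hT.le
    rw [gronwallBound_x0] at this
    exact add_nonneg (Real.sqrt_nonneg _) (mul_nonneg hL.le ((abs_nonneg x₀).trans this))
  have hlipX {u X : ℝ → ℝ} (hu : Admissible U T u) (hX : Trajectory b x₀ T u X) :
      ∀ t ∈ Icc 0 T, ∀ r ∈ Icc 0 T, t ≤ r → |X r - X t| ≤ M * (r - t) := fun _ ht _ hr htr =>
    hX.abs_sub_le hA1uc.continuousOn hgrowth (Real.sqrt_nonneg _) hL.le hT.le hu ht hr htr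
  refine ⟨2 * M + 1, by positivity,
    fun δ n hδ hδ1 hn hmesh u X u0 X0 hu hX hu0 hX0 hnodes r hr => ?_⟩
  have hδ_le : δ ≤ √δ := Real.le_sqrt_self_iff.2 hδ1.le
  have := abs_sub_le_of_abs_sub_nodes_le hT hn hM (hlipX hu0 hX0) (hlipX hu hX) hnodes hr
  rw [hmesh] at this
  linarith

/-- If two trajectories are `δ`-close at the points of a uniform partition of
mesh `√δ`, they are `C√δ`-close uniformly on `[0,T]`, with `C` depending only
on `x₀` and `T`. -/
theorem stmt_11
    (T x₀ : ℝ) (hT : 0 < T) (U : Set ℝ) (hU : IsConnected U)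
    (b : ℝ → ℝ → ℝ)
    -- (A1)
    (hA1uc : UniformContinuousOn (fun q : ℝ × ℝ => b q.1 q.2) (Set.univ ×ˢ U))
    (hA1lip : ∃ c > 0, ∀ x₁ x₂ v, v ∈ U → |b x₁ v - b x₂ v| ≤ c * |x₁ - x₂|)
    -- (A2)
    (hA2 : ∃ c > 0, ∀ u : ℝ → ℝ, Admissible U T u →
      (∫ t in (0 : ℝ)..T, (b 0 (u t)) ^ 2) ≤ c) :
    ∃ C > 0, ∀ (δ : ℝ) (n : ℕ), 0 < δ → δ < 1 → 0 < n →
      T / n = Real.sqrt δ →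
      ∀ u X u0 X0 : ℝ → ℝ,
        Admissible U T u → Trajectory b x₀ T u X →
        Admissible U T u0 → Trajectory b x₀ T u0 X0 →
        (∀ i ≤ n, |X0 ((i : ℝ) * T / n) - X ((i : ℝ) * T / n)| ≤ δ) →
        ∀ r ∈ Set.Icc (0 : ℝ) T, |X0 r - X r| ≤ C * Real.sqrt δ :=
  stmt_11_general T x₀ hT U b hA1uc hA1lip hA2
end
end

section
/- (LQ problem: explicit optimal pair under continuous constraints.) Consider the controlled linear equation X^u(t) = 2 + ∫₀^t (X^u(s) + u(s)) ds with controls u(t) ∈ U = [−3,3] on [0,1], the cost J(u) = ∫₀¹ (X^u(t))² dt + (X^u(1))², and the state constraint X^u(t) ≥ 1 for all t ∈ [0,1]. Then the optimal pair is given by ū(t) = −3, X̄(t) = 3 − e^t for t ∈ [0, ln 2], and ū(t) = −1, X̄(t) = 1 for t ∈ (ln 2, 1]; i.e. this pair is admissible (satisfies the state equation and the constraint) and J(ū) ≤ J(u) for every admissible control u whose trajectory satisfies X^u(t) ≥ 1 on [0,1]. -/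
/-
`X̄ = max (3 - eᵗ) 1` is the pointwise smallest state the constraints allow. Since `u ≥ -3`, a
Gronwall comparison with the solution `3 - eᵗ` of the state equation for `u ≡ -3` gives
`Xᵘ ≥ 3 - eᵗ`, and the state constraint gives `Xᵘ ≥ 1`. As `X̄ ≥ 1 > 0`, both terms of the cost
are monotone in the state, so `J(ū) ≤ J(u)`.
-/

open MeasureTheory Set Filter Topology

noncomputable section

/-- An admissible control for the LQ problem: measurable with values in `[-3,3]`. -/
def LQAdmissible (u : ℝ → ℝ) : Prop :=
  Measurable u ∧ ∀ t, u t ∈ Set.Icc (-3 : ℝ) 3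

/-- `X` solves the LQ state equation `X t = 2 + ∫₀ᵗ (X s + u s) ds` on `[0,1]`. -/
def LQTrajectory (u X : ℝ → ℝ) : Prop :=
  ContinuousOn X (Set.Icc 0 1) ∧
    ∀ s ∈ Set.Icc (0 : ℝ) 1, X s = 2 + ∫ τ in (0 : ℝ)..s, (X τ + u τ)

/-- The LQ cost `J(u) = ∫₀¹ (Xᵘ t)² dt + (Xᵘ 1)²`. -/
def LQCost (X : ℝ → ℝ) : ℝ :=
  (∫ t in (0 : ℝ)..1, (X t) ^ 2) + (X 1) ^ 2

/-- The claimed optimal control of the LQ problem under the continuous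
state constraint `X ≥ 1`. -/
def LQubar : ℝ → ℝ := fun t => if t ≤ Real.log 2 then (-3 : ℝ) else -1

/-- The claimed optimal trajectory of the LQ problem under the continuous
state constraint `X ≥ 1`. -/
def LQXbar : ℝ → ℝ := fun t => if t ≤ Real.log 2 then 3 - Real.exp t else 1

theorem nonneg_of_integral_le_self {Y : ℝ → ℝ} {T : ℝ} (hY : ContinuousOn Y (Icc 0 T))
    (hle : ∀ t ∈ Icc 0 T, ∫ s in (0 : ℝ)..t, Y s ≤ Y t) : ∀ t ∈ Icc 0 T, 0 ≤ Y t := by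
  intro t ht
  have hT : 0 ≤ T := ht.1.trans ht.2
  set g : ℝ → ℝ := fun t => ∫ s in (0 : ℝ)..t, Y s
  have hYi : IntegrableOn Y (uIcc 0 T) := by
    rw [uIcc_of_le hT]; exact hY.integrableOn_Icc
  have hg_cont : ContinuousOn g (Icc 0 T) := by
    simpa only [uIcc_of_le hT] using intervalIntegral.continuousOn_primitive_interval hYi
  have hg_deriv : ∀ x ∈ Ioo 0 T, HasDerivAt g (Y x) x := by
    intro x hx
    have hsub : uIcc 0 x ⊆ uIcc 0 T := by
      rw [uIcc_of_le hT, uIcc_of_le hx.1.le]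
      exact Icc_subset_Icc_right hx.2.le
    exact intervalIntegral.integral_hasDerivAt_right (hYi.mono_set hsub).intervalIntegrable
      ((hY.mono Ioo_subset_Icc_self).stronglyMeasurableAtFilter isOpen_Ioo x hx)
      (hY.continuousAt (Icc_mem_nhds hx.1 hx.2))
  -- `exp (-t) * g t` is nondecreasing since its derivative is `exp (-t) * (Y t - g t) ≥ 0`.
  have hmono : MonotoneOn (fun t => Real.exp (-t) * g t) (Icc 0 T) := by
    have hderiv : ∀ x ∈ Ioo 0 T,
        HasDerivAt (fun t => Real.exp (-t) * g t) (Real.exp (-x) * (Y x - g x)) x := by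
      intro x hx
      exact (((hasDerivAt_neg x).exp).mul (hg_deriv x hx)).congr_deriv (by ring)
    refine monotoneOn_of_deriv_nonneg (convex_Icc 0 T)
      ((Real.continuous_exp.comp continuous_neg).continuousOn.mul hg_cont) ?_ ?_
    · rw [interior_Icc]
      exact fun x hx => (hderiv x hx).differentiableAt.differentiableWithinAt
    · rw [interior_Icc]
      intro x hx
      rw [(hderiv x hx).deriv]
      exact mul_nonneg (Real.exp_pos _).le (sub_nonneg.2 (hle x (Ioo_subset_Icc_self hx)))
  have hg : 0 ≤ g t := by
    have := hmono (left_mem_Icc.2 hT) ht ht.1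
    simp only [g, intervalIntegral.integral_same, mul_zero] at this
    exact nonneg_of_mul_nonneg_right this (Real.exp_pos _)
  exact hg.trans (hle t ht)

theorem LQAdmissible.intervalIntegrable {u : ℝ → ℝ} (hu : LQAdmissible u) (a b : ℝ) :
    IntervalIntegrable u volume a b := by
  refine (intervalIntegrable_const (c := (3 : ℝ))).mono_fun hu.1.aestronglyMeasurable
    (ae_of_all _ fun t => ?_)
  simpa [abs_le] using hu.2 t

theorem LQTrajectory.le_of_le {u w X Z : ℝ → ℝ} (hu : IntervalIntegrable u volume 0 1)
    (hw : IntervalIntegrable w volume 0 1) (hwu : ∀ t ∈ Icc (0 : ℝ) 1, w t ≤ u t)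
    (hX : LQTrajectory u X) (hZ : LQTrajectory w Z) : ∀ t ∈ Icc (0 : ℝ) 1, Z t ≤ X t := by
  have hsub : ∀ t ∈ Icc (0 : ℝ) 1, uIcc 0 t ⊆ uIcc 0 1 := fun t ht => by
    rw [uIcc_of_le ht.1, uIcc_of_le zero_le_one]; exact Icc_subset_Icc_right ht.2
  have hint : ∀ {f : ℝ → ℝ}, ContinuousOn f (Icc 0 1) →
      ∀ t ∈ Icc (0 : ℝ) 1, IntervalIntegrable f volume 0 t := fun hf t ht =>
    (hf.mono (by rw [uIcc_of_le zero_le_one])).intervalIntegrable.mono_set (hsub t ht)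
  have hdiff : ∀ t ∈ Icc (0 : ℝ) 1, ∫ s in (0 : ℝ)..t, (X s - Z s) ≤ X t - Z t := by
    intro t ht
    have hu' := hu.mono_set (hsub t ht)
    have hw' := hw.mono_set (hsub t ht)
    rw [hX.2 t ht, hZ.2 t ht, add_sub_add_left_eq_sub,
      ← intervalIntegral.integral_sub ((hint hX.1 t ht).add hu') ((hint hZ.1 t ht).add hw')]
    refine intervalIntegral.integral_mono_on ht.1 ((hint hX.1 t ht).sub (hint hZ.1 t ht))
      (((hint hX.1 t ht).add hu').sub ((hint hZ.1 t ht).add hw')) fun s hs => ?_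
    linarith [hwu s ⟨hs.1, hs.2.trans ht.2⟩]
  intro t ht
  exact sub_nonneg.1 (nonneg_of_integral_le_self (hX.1.sub hZ.1) hdiff t ht)

theorem lqTrajectory_three_sub_exp : LQTrajectory (fun _ => -3) (fun t => 3 - Real.exp t) := by
  refine ⟨by fun_prop, fun s _ => ?_⟩
  simp only [show ∀ τ, 3 - Real.exp τ + -3 = -Real.exp τ from fun τ => by ring,
    intervalIntegral.integral_neg, integral_exp, Real.exp_zero]
  ring

theorem LQTrajectory.three_sub_exp_le {u X : ℝ → ℝ} (hu : LQAdmissible u)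
    (hX : LQTrajectory u X) : ∀ t ∈ Icc (0 : ℝ) 1, 3 - Real.exp t ≤ X t :=
  hX.le_of_le (hu.intervalIntegrable 0 1) intervalIntegrable_const (fun t _ => (hu.2 t).1)
    lqTrajectory_three_sub_exp

theorem lqCost_le_of_le {X Y : ℝ → ℝ} (hX : ContinuousOn X (Icc 0 1))
    (hY : ContinuousOn Y (Icc 0 1)) (hY0 : ∀ t ∈ Icc (0 : ℝ) 1, 0 ≤ Y t)
    (hYX : ∀ t ∈ Icc (0 : ℝ) 1, Y t ≤ X t) : LQCost Y ≤ LQCost X := by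
  have hsq : ∀ t ∈ Icc (0 : ℝ) 1, Y t ^ 2 ≤ X t ^ 2 := fun t ht =>
    pow_le_pow_left₀ (hY0 t ht) (hYX t ht) 2
  have hint : ∀ {f : ℝ → ℝ}, ContinuousOn f (Icc 0 1) →
      IntervalIntegrable (fun t => f t ^ 2) volume 0 1 := fun hf =>
    ((hf.pow 2).mono (by rw [uIcc_of_le zero_le_one])).intervalIntegrable
  exact add_le_add (intervalIntegral.integral_mono_on zero_le_one (hint hY) (hint hX) hsq)
    (hsq 1 (right_mem_Icc.2 zero_le_one))

theorem lqXbar_eq_max (t : ℝ) : LQXbar t = max (3 - Real.exp t) 1 := by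
  unfold LQXbar
  split_ifs with h
  · have : Real.exp t ≤ 2 := by simpa [Real.exp_log two_pos] using Real.exp_le_exp.2 h
    exact (max_eq_left (by linarith)).symm
  · have : 2 < Real.exp t := by simpa [Real.exp_log two_pos] using Real.exp_lt_exp.2 (not_le.1 h)
    exact (max_eq_right (by linarith)).symm

theorem continuous_lqXbar : Continuous LQXbar := by
  rw [show LQXbar = fun t => max (3 - Real.exp t) 1 from funext lqXbar_eq_max]
  fun_prop

theorem one_le_lqXbar (t : ℝ) : 1 ≤ LQXbar t :=
  lqXbar_eq_max t ▸ le_max_right _ _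

theorem lqAdmissible_lqubar : LQAdmissible LQubar :=
  ⟨Measurable.ite measurableSet_Iic measurable_const measurable_const,
    fun t => by unfold LQubar; split_ifs <;> norm_num⟩

theorem hasDerivAt_lqXbar {x : ℝ} (hx : x ≠ Real.log 2) :
    HasDerivAt LQXbar (LQXbar x + LQubar x) x := by
  rcases hx.lt_or_gt with hlt | hgt
  · have hev : LQXbar =ᶠ[𝓝 x] fun t => 3 - Real.exp t :=
      (eventually_lt_nhds hlt).mono fun t ht => if_pos ht.le
    rw [show LQXbar x + LQubar x = -Real.exp x by simp only [LQXbar, LQubar, if_pos hlt.le]; ring]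
    exact ((Real.hasDerivAt_exp x).const_sub 3).congr_of_eventuallyEq hev
  · have hev : LQXbar =ᶠ[𝓝 x] fun _ => 1 :=
      (eventually_gt_nhds hgt).mono fun t ht => if_neg (not_le.2 ht)
    rw [show LQXbar x + LQubar x = 0 by simp only [LQXbar, LQubar, if_neg (not_le.2 hgt)]; ring]
    exact (hasDerivAt_const x 1).congr_of_eventuallyEq hev

theorem lqTrajectory_lqXbar : LQTrajectory LQubar LQXbar := by
  refine ⟨continuous_lqXbar.continuousOn, fun s hs => ?_⟩
  have h0 : LQXbar 0 = 2 := by norm_num [LQXbar, Real.log_nonneg one_le_two]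
  -- The exceptional point is the corner of `LQXbar` at `log 2`.
  rw [integral_eq_of_hasDerivAt_off_countable_of_le LQXbar _ hs.1 (countable_singleton _)
    continuous_lqXbar.continuousOn (fun x hx => hasDerivAt_lqXbar hx.2)
    ((continuous_lqXbar.intervalIntegrable 0 s).add
      (lqAdmissible_lqubar.intervalIntegrable 0 s)), h0]
  ring

/-- The explicit pair `(ū, X̄)` is optimal for the LQ problem under the
continuous state constraint `X(t) ≥ 1` on `[0,1]`. -/
theorem stmt_12 :
    LQAdmissible LQubar ∧ LQTrajectory LQubar LQXbar ∧
    (∀ t ∈ Set.Icc (0 : ℝ) 1, 1 ≤ LQXbar t) ∧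
    ∀ u X : ℝ → ℝ, LQAdmissible u → LQTrajectory u X →
      (∀ t ∈ Set.Icc (0 : ℝ) 1, 1 ≤ X t) →
      LQCost LQXbar ≤ LQCost X := by
  refine ⟨lqAdmissible_lqubar, lqTrajectory_lqXbar, fun t _ => one_le_lqXbar t,
    fun u X hu hX hX1 => ?_⟩
  refine lqCost_le_of_le hX.1 continuous_lqXbar.continuousOn
    (fun t _ => zero_le_one.trans (one_le_lqXbar t)) fun t ht => ?_
  rw [lqXbar_eq_max]
  exact max_le (hX.three_sub_exp_le hu t ht) (hX1 t ht)
end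
end
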